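/- Let v : ℝ → ℝ be C² and satisfy v'' + (N-2)v' = -λ e^{v+2s} on ℝ with λ > 0 and N ≥ 3. Then the Lyapunov function L(s) = (v'(s)+2)²/2 + λ e^{v(s)+2s} - 2(N-2)(v(s)+2s) is non-increasing in s. -/

import Mathlib

open Real

/-- The paper's `L`, with `c` in place of `N - 2`. -/
noncomputable def lyapunov (c lam : ℝ) (v : ℝ → ℝ) (s : ℝ) : ℝ :=
  (deriv v s + 2) ^ 2 / 2 + lam * exp (v s + 2 * s) - 2 * c * (v s + 2 * s)

section

variable {c lam : ℝ} {v : ℝ → ℝ}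

theorem hasDerivAt_lyapunov {s : ℝ} (hv : DifferentiableAt ℝ v s)
    (hv' : DifferentiableAt ℝ (deriv v) s)
    (hode : deriv (deriv v) s + c * deriv v s + lam * exp (v s + 2 * s) = 0) :
    HasDerivAt (lyapunov c lam v) (-c * (deriv v s + 2) ^ 2) s := by
  have hshift : HasDerivAt (fun s => v s + 2 * s) (deriv v s + 2) s := by
    simpa using hv.hasDerivAt.fun_add ((hasDerivAt_id s).const_mul 2)
  have hkin : HasDerivAt (fun s => (deriv v s + 2) ^ 2 / 2)
      ((deriv v s + 2) * deriv (deriv v) s) s :=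
    (((hv'.hasDerivAt.add_const 2).pow 2).div_const 2).congr_deriv (by ring)
  refine ((hkin.add (hshift.exp.const_mul lam)).sub (hshift.const_mul (2 * c))).congr_deriv ?_
  linear_combination (deriv v s + 2) * hode

theorem antitone_lyapunov (hc : 0 ≤ c) (hv : Differentiable ℝ v)
    (hv' : Differentiable ℝ (deriv v))
    (hode : ∀ s, deriv (deriv v) s + c * deriv v s + lam * exp (v s + 2 * s) = 0) :
    Antitone (lyapunov c lam v) := by
  have hL s := hasDerivAt_lyapunov (hv s) (hv' s) (hode s)
  refine antitone_of_deriv_nonpos (fun s => (hL s).differentiableAt) fun s => ?_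
  rw [(hL s).deriv]
  nlinarith [sq_nonneg (deriv v s + 2)]

end

theorem stmt_4_general (N : ℕ) (hN : 3 ≤ N) (lam : ℝ)
    (v : ℝ → ℝ) (hv : ContDiff ℝ 2 v)
    (heq : ∀ s : ℝ,
      deriv (deriv v) s + ((N : ℝ) - 2) * deriv v s + lam * Real.exp (v s + 2 * s) = 0) :
    Antitone (fun s : ℝ =>
      (deriv v s + 2) ^ 2 / 2 + lam * Real.exp (v s + 2 * s)
        - 2 * ((N : ℝ) - 2) * (v s + 2 * s)) := by
  have hc : (0 : ℝ) ≤ N - 2 := by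
    rw [sub_nonneg]
    exact_mod_cast (by omega : 2 ≤ N)
  have hv' : Differentiable ℝ (deriv v) :=
    (hv.iterate_deriv' 1 1).differentiable one_ne_zero
  exact antitone_lyapunov hc (hv.differentiable (by norm_num)) hv' heq

theorem stmt_4 (N : ℕ) (hN : 3 ≤ N) (lam : ℝ) (hlam : 0 < lam)
    (v : ℝ → ℝ) (hv : ContDiff ℝ 2 v)
    (heq : ∀ s : ℝ,
      deriv (deriv v) s + ((N : ℝ) - 2) * deriv v s + lam * Real.exp (v s + 2 * s) = 0) :
    Antitone (fun s : ℝ =>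
      (deriv v s + 2) ^ 2 / 2 + lam * Real.exp (v s + 2 * s)
        - 2 * ((N : ℝ) - 2) * (v s + 2 * s)) :=
  stmt_4_general N hN lam v hv heq
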